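/- Let V be a finite measure space, let λ > 0, let T : V × V → ℝ be a non-negative measurable turning kernel satisfying ∫_V T(v,u) dv = 1 for every u ∈ V, and let K : V × V → ℝ be a non-negative bounded measurable delay kernel. Suppose p : ℝ × V → ℝ is bounded, measurable, continuously differentiable in t with bounded time derivative, and satisfies the delayed velocity-jump equation ∂p/∂t(t,v) = −λ p(t,v) + λ ∫_V T(v,u) p(t − K(v,u), u) du for all t ∈ ℝ and v ∈ V. Then the total mass M(t) = ∫_V p(t,v) dv + λ ∫_V ∫_V T(v,u) ( ∫_{t−K(v,u)}^{t} p(s,u) ds ) du dv is constant in t. -/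

import Mathlib

open MeasureTheory

/-!
For a fixed velocity `v`, integrating the equation over `[t₁, t₂]` writes the change of `p(·, v)`
as the loss `-λ ∫ p(s, v) ds` plus the delayed gain `λ ∫ T(v, u) ∫ p(s - K(v, u), u) ds du`.
Sliding a window of length `k` from `t₁` to `t₂` changes `∫_{t-k}^t p(s, u) ds` by
`∫_{t₁}^{t₂} p(s, u) ds - ∫_{t₁}^{t₂} p(s - k, u) ds`, so the delayed gain cancels against the
change of the tumbling term. What is left is `λ (∫ T(v, u) c(u) du - c(v))` with
`c(u) = ∫_{t₁}^{t₂} p(s, u) ds`, and its integral over `v` vanishes because `∫ T(v, u) dv = 1`.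
-/

theorem measurable_intervalIntegral_of_measurable {α : Type*} [MeasurableSpace α]
    {f : α → ℝ → ℝ} (hf : Measurable (Function.uncurry f)) {a b : α → ℝ}
    (ha : Measurable a) (hb : Measurable b) :
    Measurable fun x => ∫ s in a x..b x, f x s := by
  have hIoc : ∀ {a b : α → ℝ}, Measurable a → Measurable b →
      Measurable fun x => ∫ s in Set.Ioc (a x) (b x), f x s := by
    intro a b ha hb
    have hS : MeasurableSet {r : α × ℝ | a r.1 < r.2 ∧ r.2 ≤ b r.1} :=
      (measurableSet_lt (ha.comp measurable_fst) measurable_snd).inter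
        (measurableSet_le measurable_snd (hb.comp measurable_fst))
    convert ((hf.indicator hS).stronglyMeasurable.integral_prod_right'
      (ν := (volume : Measure ℝ))).measurable using 2 with x
    rw [← integral_indicator measurableSet_Ioc]
    congr 1 with s
  exact (hIoc ha hb).sub (hIoc hb ha)

theorem norm_integral_window_le {f : ℝ → ℝ} {C k K : ℝ} (hf : ∀ s, ‖f s‖ ≤ C)
    (hk : |k| ≤ K) (t : ℝ) : ‖∫ s in (t - k)..t, f s‖ ≤ C * K := by
  have hC : 0 ≤ C := (norm_nonneg _).trans (hf 0)
  calc ‖∫ s in (t - k)..t, f s‖ ≤ C * |t - (t - k)| :=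
        intervalIntegral.norm_integral_le_of_norm_le_const fun s _ => hf s
    _ ≤ C * K := by rw [sub_sub_cancel]; exact mul_le_mul_of_nonneg_left hk hC

theorem integral_sliding_window_sub {f : ℝ → ℝ} (hf : Continuous f) (k t₁ t₂ : ℝ) :
    (∫ s in (t₂ - k)..t₂, f s) - ∫ s in (t₁ - k)..t₁, f s
      = (∫ s in t₁..t₂, f s) - ∫ s in t₁..t₂, f (s - k) := by
  have hf_int := hf.intervalIntegrable (μ := volume)
  rw [intervalIntegral.integral_comp_sub_right f k]
  linarith [intervalIntegral.integral_add_adjacent_intervals (hf_int (t₁ - k) t₁) (hf_int t₁ t₂),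
    intervalIntegral.integral_add_adjacent_intervals (hf_int (t₁ - k) (t₂ - k))
      (hf_int (t₂ - k) t₂)]

section Kernel

variable {V W : Type*} [MeasurableSpace V] [MeasurableSpace W] {μ : Measure V} {ν : Measure W}

theorem integrable_prod_of_integral_eq_one [SFinite μ] [IsFiniteMeasure ν] {T : V → W → ℝ}
    (hT_meas : Measurable fun q : V × W => T q.1 q.2) (hT_nonneg : ∀ v u, 0 ≤ T v u)
    (hT_prob : ∀ u, ∫ v, T v u ∂μ = 1) :
    Integrable (fun q : V × W => T q.1 q.2) (μ.prod ν) := by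
  refine (integrable_prod_iff' hT_meas.aestronglyMeasurable).2 ⟨ae_of_all _ fun u => ?_, ?_⟩
  · exact Integrable.of_integral_ne_zero (by rw [hT_prob u]; exact one_ne_zero)
  · simp_rw [Real.norm_of_nonneg (hT_nonneg _ _), hT_prob]
    exact integrable_const 1

theorem integral_integral_mul_eq_integral [SFinite μ] [SFinite ν] {T : V → W → ℝ}
    {c : W → ℝ} (hTc : Integrable (fun q : V × W => T q.1 q.2 * c q.2) (μ.prod ν))
    (hT_prob : ∀ u, ∫ v, T v u ∂μ = 1) :
    ∫ v, ∫ u, T v u * c u ∂ν ∂μ = ∫ u, c u ∂ν := by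
  rw [integral_integral_swap hTc]
  simp_rw [integral_mul_const, hT_prob, one_mul]

theorem integrable_integral_mul_window [SFinite ν] {T K : V → W → ℝ} {p : ℝ → W → ℝ}
    {C CK : ℝ} (hT : Integrable (fun q : V × W => T q.1 q.2) (μ.prod ν))
    (hK : Measurable fun q : V × W => K q.1 q.2) (hp : Measurable fun q : ℝ × W => p q.1 q.2)
    (hpC : ∀ t u, ‖p t u‖ ≤ C) (hKC : ∀ v u, |K v u| ≤ CK) (t : ℝ) :
    Integrable (fun v => ∫ u, T v u * (∫ s in (t - K v u)..t, p s u) ∂ν) μ := by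
  have hwindow : Measurable fun q : V × W => ∫ s in (t - K q.1 q.2)..t, p s q.2 :=
    measurable_intervalIntegral_of_measurable (f := fun (q : V × W) s => p s q.2)
      (hp.comp (measurable_snd.prodMk (measurable_snd.comp measurable_fst)))
      (measurable_const.sub hK) measurable_const
  exact (hT.mul_bdd hwindow.aestronglyMeasurable (ae_of_all _ fun q =>
    norm_integral_window_le (hpC · q.2) (hKC q.1 q.2) t)).integral_prod_left

theorem integral_integral_mul_sub_eq_zero [IsFiniteMeasure μ] {T : V → V → ℝ} {c : V → ℝ}
    {C : ℝ} (hT : Integrable (fun q : V × V => T q.1 q.2) (μ.prod μ))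
    (hT_prob : ∀ u, ∫ v, T v u ∂μ = 1) (hc : Measurable c) (hcC : ∀ u, ‖c u‖ ≤ C) :
    ∫ v, ((∫ u, T v u * c u ∂μ) - c v) ∂μ = 0 := by
  have hTc : Integrable (fun q : V × V => T q.1 q.2 * c q.2) (μ.prod μ) :=
    hT.mul_bdd (hc.comp measurable_snd).aestronglyMeasurable (ae_of_all _ (hcC ·.2))
  have hTc_left : Integrable (fun v => ∫ u, T v u * c u ∂μ) μ := hTc.integral_prod_left
  rw [integral_sub hTc_left (.of_bound hc.aestronglyMeasurable C (ae_of_all _ hcC)),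
    integral_integral_mul_eq_integral hTc hT_prob, sub_self]

theorem integrable_prod_mul_delay [SFinite μ] {ρ : Measure ℝ} [IsFiniteMeasure ρ]
    {w k : V → ℝ} {p : ℝ → V → ℝ} {C : ℝ} (hw : Integrable w μ) (hk : Measurable k)
    (hp : Measurable fun q : ℝ × V => p q.1 q.2) (hpC : ∀ t u, ‖p t u‖ ≤ C) :
    Integrable (fun r : ℝ × V => w r.2 * p (r.1 - k r.2) r.2) (ρ.prod μ) :=
  (hw.comp_snd ρ).mul_bdd
    (hp.comp ((measurable_fst.sub (hk.comp measurable_snd)).prodMk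
      measurable_snd)).aestronglyMeasurable
    (ae_of_all _ fun _ => hpC _ _)

theorem sub_eq_of_hasDerivAt_of_delay_eq [SFinite μ] {q q' : ℝ → ℝ} {w k : V → ℝ}
    {p : ℝ → V → ℝ} {lam C : ℝ} (hq : ∀ t, HasDerivAt q (q' t) t)
    (hq' : ∀ t, q' t = -lam * q t + lam * ∫ u, w u * p (t - k u) u ∂μ)
    (hw : Integrable w μ) (hk : Measurable k) (hp : Measurable fun q : ℝ × V => p q.1 q.2)
    (hpC : ∀ t u, ‖p t u‖ ≤ C) (t₁ t₂ : ℝ) :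
    q t₂ - q t₁
      = -lam * (∫ s in t₁..t₂, q s) + lam * ∫ u, w u * (∫ s in t₁..t₂, p (s - k u) u) ∂μ := by
  have : IsFiniteMeasure (volume.restrict (Set.uIoc t₁ t₂)) :=
    isFiniteMeasure_restrict.2 measure_Ioc_lt_top.ne
  have hF := integrable_prod_mul_delay (ρ := volume.restrict (Set.uIoc t₁ t₂)) hw hk hp hpC
  have hdelay : IntervalIntegrable (fun s => ∫ u, w u * p (s - k u) u ∂μ) volume t₁ t₂ :=
    intervalIntegrable_iff.2 hF.integral_prod_left
  have hq_int : IntervalIntegrable q volume t₁ t₂ :=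
    (continuous_iff_continuousAt.2 fun t => (hq t).continuousAt).intervalIntegrable _ _
  have hrhs := (hq_int.const_mul (-lam)).add (hdelay.const_mul lam)
  rw [funext hq'] at hq
  rw [← intervalIntegral.integral_eq_sub_of_hasDerivAt (fun t _ => hq t) hrhs,
    intervalIntegral.integral_add (hq_int.const_mul _) (hdelay.const_mul _),
    intervalIntegral.integral_const_mul, intervalIntegral.integral_const_mul,
    intervalIntegral_integral_swap hF]
  simp_rw [intervalIntegral.integral_const_mul]

theorem mass_balance_of_delay_eq [SFinite μ] {q q' : ℝ → ℝ} {w k : V → ℝ}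
    {p : ℝ → V → ℝ} {lam C CK : ℝ} (hq : ∀ t, HasDerivAt q (q' t) t)
    (hq' : ∀ t, q' t = -lam * q t + lam * ∫ u, w u * p (t - k u) u ∂μ)
    (hw : Integrable w μ) (hk : Measurable k) (hp : Measurable fun q : ℝ × V => p q.1 q.2)
    (hp_cont : ∀ u, Continuous fun s => p s u) (hpC : ∀ t u, ‖p t u‖ ≤ C)
    (hkC : ∀ u, |k u| ≤ CK) (t₁ t₂ : ℝ) :
    (q t₂ + lam * ∫ u, w u * (∫ s in (t₂ - k u)..t₂, p s u) ∂μ)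
        - (q t₁ + lam * ∫ u, w u * (∫ s in (t₁ - k u)..t₁, p s u) ∂μ)
      = lam * ((∫ u, w u * (∫ s in t₁..t₂, p s u) ∂μ) - ∫ s in t₁..t₂, q s) := by
  have hw_mul : ∀ {g : V → ℝ} {B : ℝ}, Measurable g → (∀ u, ‖g u‖ ≤ B) →
      Integrable (fun u => w u * g u) μ :=
    fun hg hgB => hw.mul_bdd hg.aestronglyMeasurable (ae_of_all _ hgB)
  have hp_swap : Measurable (Function.uncurry fun u s => p s u) := hp.comp measurable_swap
  have hp_delay : Measurable (Function.uncurry fun u s => p (s - k u) u) :=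
    hp.comp ((measurable_snd.sub (hk.comp measurable_fst)).prodMk measurable_fst)
  have hwindow : ∀ t, Integrable (fun u => w u * ∫ s in (t - k u)..t, p s u) μ := fun t =>
    hw_mul (measurable_intervalIntegral_of_measurable hp_swap (measurable_const.sub hk)
      measurable_const) fun u => norm_integral_window_le (hpC · u) (hkC u) t
  have hrun : Integrable (fun u => w u * ∫ s in t₁..t₂, p s u) μ :=
    hw_mul (measurable_intervalIntegral_of_measurable hp_swap measurable_const measurable_const)
      fun u => intervalIntegral.norm_integral_le_of_norm_le_const fun s _ => hpC s u
  have hdelayed : Integrable (fun u => w u * ∫ s in t₁..t₂, p (s - k u) u) μ :=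
    hw_mul (measurable_intervalIntegral_of_measurable hp_delay measurable_const measurable_const)
      fun u => intervalIntegral.norm_integral_le_of_norm_le_const fun s _ => hpC (s - k u) u
  have hshift : (∫ u, w u * (∫ s in (t₂ - k u)..t₂, p s u) ∂μ)
        - ∫ u, w u * (∫ s in (t₁ - k u)..t₁, p s u) ∂μ
      = (∫ u, w u * (∫ s in t₁..t₂, p s u) ∂μ)
        - ∫ u, w u * (∫ s in t₁..t₂, p (s - k u) u) ∂μ := by
    rw [← integral_sub (hwindow t₂) (hwindow t₁), ← integral_sub hrun hdelayed]
    congr 1 with u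
    rw [← mul_sub, ← mul_sub, integral_sliding_window_sub (hp_cont u)]
  linear_combination sub_eq_of_hasDerivAt_of_delay_eq hq hq' hw hk hp hpC t₁ t₂ + lam * hshift

end Kernel

theorem delay_velocity_jump_mass_conservation_general
    {V : Type*} [MeasurableSpace V] (μ : Measure V) [IsFiniteMeasure μ]
    (lam : ℝ)
    (T : V → V → ℝ)
    (hT_meas : Measurable (fun q : V × V => T q.1 q.2))
    (hT_nonneg : ∀ v u : V, 0 ≤ T v u)
    (hT_prob : ∀ u : V, ∫ v, T v u ∂μ = 1)
    (K : V → V → ℝ)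
    (hK_meas : Measurable (fun q : V × V => K q.1 q.2))
    (hK_nonneg : ∀ v u : V, 0 ≤ K v u)
    (hK_bdd : ∃ CK : ℝ, ∀ v u : V, K v u ≤ CK)
    (p p' : ℝ → V → ℝ)
    (hp_meas : Measurable (fun q : ℝ × V => p q.1 q.2))
    (hp_bdd : ∃ C : ℝ, ∀ (t : ℝ) (v : V), |p t v| ≤ C)
    (hp_deriv : ∀ (t : ℝ) (v : V), HasDerivAt (fun s => p s v) (p' t v) t)
    (hpde : ∀ (t : ℝ) (v : V),
      p' t v = -lam * p t v + lam * ∫ u, T v u * p (t - K v u) u ∂μ) :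
    ∀ t₁ t₂ : ℝ,
      (∫ v, p t₁ v ∂μ)
        + lam * ∫ v, (∫ u, T v u * (∫ s in (t₁ - K v u)..t₁, p s u) ∂μ) ∂μ
      = (∫ v, p t₂ v ∂μ)
        + lam * ∫ v, (∫ u, T v u * (∫ s in (t₂ - K v u)..t₂, p s u) ∂μ) ∂μ := by
  obtain ⟨C, hpC⟩ := hp_bdd
  obtain ⟨CK, hCK⟩ := hK_bdd
  have hKC : ∀ v u, |K v u| ≤ CK := fun v u =>
    (abs_of_nonneg (hK_nonneg v u)).trans_le (hCK v u)
  have hp_cont : ∀ u, Continuous fun s => p s u := fun u =>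
    continuous_iff_continuousAt.2 fun s => (hp_deriv s u).continuousAt
  have hT := integrable_prod_of_integral_eq_one (ν := μ) hT_meas hT_nonneg hT_prob
  have hp_int : ∀ t, Integrable (fun v => p t v) μ := fun t =>
    .of_bound (hp_meas.comp measurable_prodMk_left).aestronglyMeasurable C (ae_of_all _ (hpC t))
  have hwindow_int := integrable_integral_mul_window hT hK_meas hp_meas hpC hKC
  have hmass_int : ∀ t, Integrable
      (fun v => p t v + lam * ∫ u, T v u * (∫ s in (t - K v u)..t, p s u) ∂μ) μ := fun t =>
    (hp_int t).add ((hwindow_int t).const_mul lam)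
  intro t₁ t₂
  have hbalance := hT.prod_right_ae.mono fun v hTv =>
    mass_balance_of_delay_eq (hp_deriv · v) (hpde · v) hTv (hK_meas.comp measurable_prodMk_left)
      hp_meas hp_cont hpC (hKC v) t₁ t₂
  have hrun_meas : Measurable fun u => ∫ s in t₁..t₂, p s u :=
    measurable_intervalIntegral_of_measurable (f := fun u s => p s u)
      (hp_meas.comp measurable_swap) measurable_const measurable_const
  have hrun_bdd : ∀ u, ‖∫ s in t₁..t₂, p s u‖ ≤ C * |t₂ - t₁| := fun u =>
    intervalIntegral.norm_integral_le_of_norm_le_const fun s _ => hpC s u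
  rw [← integral_const_mul, ← integral_const_mul,
    ← integral_add (hp_int t₁) ((hwindow_int t₁).const_mul lam),
    ← integral_add (hp_int t₂) ((hwindow_int t₂).const_mul lam), eq_comm, ← sub_eq_zero,
    ← integral_sub (hmass_int t₂) (hmass_int t₁), integral_congr_ae hbalance,
    integral_const_mul, integral_integral_mul_sub_eq_zero hT hT_prob hrun_meas hrun_bdd, mul_zero]

/-- Conservation of mass for the spatially homogeneous velocity jump process with
finite turning delays: if `p` satisfies
`∂p/∂t(t,v) = −λ p(t,v) + λ ∫_V T(v,u) p(t − K(v,u), u) du`,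
then the total mass (running particles plus particles currently turning)
`M(t) = ∫_V p(t,v) dv + λ ∫_V ∫_V T(v,u) (∫_{t−K(v,u)}^t p(s,u) ds) du dv`
is constant in time. -/
theorem delay_velocity_jump_mass_conservation
    {V : Type*} [MeasurableSpace V] (μ : Measure V) [IsFiniteMeasure μ]
    (lam : ℝ) (hlam : 0 < lam)
    (T : V → V → ℝ)
    (hT_meas : Measurable (fun q : V × V => T q.1 q.2))
    (hT_nonneg : ∀ v u : V, 0 ≤ T v u)
    (hT_prob : ∀ u : V, ∫ v, T v u ∂μ = 1)
    (K : V → V → ℝ)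
    (hK_meas : Measurable (fun q : V × V => K q.1 q.2))
    (hK_nonneg : ∀ v u : V, 0 ≤ K v u)
    (hK_bdd : ∃ CK : ℝ, ∀ v u : V, K v u ≤ CK)
    (p p' : ℝ → V → ℝ)
    (hp_meas : Measurable (fun q : ℝ × V => p q.1 q.2))
    (hp_bdd : ∃ C : ℝ, ∀ (t : ℝ) (v : V), |p t v| ≤ C)
    (hp_deriv : ∀ (t : ℝ) (v : V), HasDerivAt (fun s => p s v) (p' t v) t)
    (hp'_cont : ∀ v : V, Continuous fun t => p' t v)
    (hp'_bdd : ∃ C' : ℝ, ∀ (t : ℝ) (v : V), |p' t v| ≤ C')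
    (hpde : ∀ (t : ℝ) (v : V),
      p' t v = -lam * p t v + lam * ∫ u, T v u * p (t - K v u) u ∂μ) :
    ∀ t₁ t₂ : ℝ,
      (∫ v, p t₁ v ∂μ)
        + lam * ∫ v, (∫ u, T v u * (∫ s in (t₁ - K v u)..t₁, p s u) ∂μ) ∂μ
      = (∫ v, p t₂ v ∂μ)
        + lam * ∫ v, (∫ u, T v u * (∫ s in (t₂ - K v u)..t₂, p s u) ∂μ) ∂μ :=
  delay_velocity_jump_mass_conservation_general μ lam T hT_meas hT_nonneg hT_prob K hK_meas
    hK_nonneg hK_bdd p p' hp_meas hp_bdd hp_deriv hpde
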